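/- arXiv:1607.04343 — 3 statements merged into one kernel-verified Lean document; each statement's English description precedes it below -/
import Mathlib

section
/- A map p : X → S of simplicial sets is an inner fibration if and only if for every n ≥ 0 and every n-simplex σ : Δⁿ → S, the pullback X ×_{S,σ} Δⁿ is a quasicategory. -/
/-!
Inner fibrations are stable under base change, and `Δ[n]` is a quasicategory (it is the nerve
of a poset), so every pullback `X ×_S Δ[n]` of an inner fibration is a quasicategory.

Conversely, an inner horn `Λ[n, i] → X` lying over `σ : Δ[n] → S` is an inner horn in
`X ×_S Δ[n]`. A filler there projects to a self-map of `Δ[n]` that fixes the horn; since maps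
into a standard simplex are determined by their values on vertices, and for `n ≥ 2` the horn
contains every vertex, this self-map is the identity, so the filler yields a lift over `σ`.
-/

open CategoryTheory Simplicial SSet Opposite

universe v u

/-- An *inner fibration* is a map of simplicial sets with the right lifting property
with respect to the inner horn inclusions `Λ[n, i] ↪ Δ[n]` for `n ≥ 2` and `0 < i < n`. -/
def IsInnerFibration {X S : SSet.{u}} (p : X ⟶ S) : Prop :=
  ∀ ⦃n : ℕ⦄ ⦃i : Fin (n + 1)⦄, 2 ≤ n → 0 < (i : ℕ) → (i : ℕ) < n →
    HasLiftingProperty (horn n i).ι p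

namespace SSet

open Limits

lemma isInnerFibration_iff_innerFibration {X S : SSet.{u}} (p : X ⟶ S) :
    IsInnerFibration p ↔ InnerFibration p := by
  rw [innerFibration_iff]
  refine ⟨fun hp _ _ _ ⟨i, h0, hn⟩ ↦ hp (by lia) h0 hn, fun hp n i _ h0 hn ↦ ?_⟩
  exact hp _ (horn_ι_mem_innerHornInclusions (Fin.lt_def.2 h0) (Fin.lt_def.2 hn))

instance innerFibration_of_isIso {X Y : SSet.{u}} (f : X ⟶ Y) [IsIso f] : InnerFibration f :=
  ⟨MorphismProperty.rlp_of_isIso _ f⟩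

instance innerFibration_pullback_snd {X Y S : SSet.{u}} (p : X ⟶ S) (σ : Y ⟶ S)
    [InnerFibration p] : InnerFibration (pullback.snd p σ) :=
  ⟨MorphismProperty.pullback_snd _ _ (mem_innerFibrations p)⟩

instance stdSimplex.quasicategory (n : ℕ) : Quasicategory (Δ[n] : SSet.{u}) :=
  quasicategory_of_innerFibration (stdSimplex.isoNerve n).hom

lemma stdSimplex.yonedaEquiv_apply {n m : ℕ} (f : (Δ[n] : SSet.{u}) ⟶ Δ[m]) (k : Fin (n + 1)) :
    yonedaEquiv f k = f.app (op ⦋0⦌) (stdSimplex.obj₀Equiv.symm k) 0 := by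
  have := yonedaEquiv_naturality (SimplexCategory.const ⦋0⦌ ⦋n⦌ k) f
  rw [yonedaEquiv_comp] at this
  exact congr_fun (congrArg DFunLike.coe this) 0

lemma stdSimplex.hom_ext_of_app_zero {n m : ℕ} {f g : (Δ[n] : SSet.{u}) ⟶ Δ[m]}
    (h : ∀ x, f.app (op ⦋0⦌) x = g.app (op ⦋0⦌) x) : f = g := by
  apply yonedaEquiv.injective
  ext k
  rw [stdSimplex.yonedaEquiv_apply, stdSimplex.yonedaEquiv_apply, h]

lemma stdSimplex.hom_ext_of_horn {n m : ℕ} {i : Fin (n + 1)} (hn : 2 ≤ n)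
    {f g : (Δ[n] : SSet.{u}) ⟶ Δ[m]} (h : Λ[n, i].ι ≫ f = Λ[n, i].ι ≫ g) : f = g := by
  refine hom_ext_of_app_zero fun x ↦ ?_
  have hx : x ∈ (horn.{u} n i).obj (op ⦋0⦌) := by rw [horn_obj_eq_univ i 0]; trivial
  exact ConcreteCategory.congr_hom (congr_app h (op ⦋0⦌)) ⟨x, hx⟩

lemma hasLift_of_quasicategory_pullback {X S : SSet.{u}} {p : X ⟶ S} {n : ℕ} {i : Fin (n + 1)}
    (h0 : 0 < i) (hn : i < Fin.last n) {u : (Λ[n, i] : SSet.{u}) ⟶ X} {v : Δ[n] ⟶ S}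
    (sq : CommSq u Λ[n, i].ι p v) [Quasicategory (pullback p v)] : sq.HasLift := by
  obtain ⟨f, hf⟩ := Quasicategory.hornFilling h0 hn (pullback.lift u Λ[n, i].ι sq.w)
  have hsnd : f ≫ pullback.snd p v = 𝟙 Δ[n] := by
    refine stdSimplex.hom_ext_of_horn (i := i) (by grind) ?_
    rw [← Category.assoc, ← hf, pullback.lift_snd, Category.comp_id]
  refine ⟨⟨⟨f ≫ pullback.fst p v, ?_, ?_⟩⟩⟩
  · rw [← Category.assoc, ← hf, pullback.lift_fst]
  · rw [Category.assoc, pullback.condition, ← Category.assoc, hsnd, Category.id_comp]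

end SSet

/-- A map `p : X ⟶ S` of simplicial sets is an inner fibration if and only if for
every `n ≥ 0` and every `n`-simplex `σ : Δ[n] ⟶ S`, the pullback `X ×_S Δ[n]` is a
quasicategory. -/
theorem isInnerFibration_iff_pullback_quasicategory {X S : SSet.{u}} (p : X ⟶ S) :
    IsInnerFibration p ↔
      ∀ (n : ℕ) (σ : Δ[n] ⟶ S), Quasicategory (Limits.pullback p σ) := by
  refine ⟨fun hp n σ ↦ ?_, fun h n i _ h0 hn ↦ ⟨fun {_ v} sq ↦ ?_⟩⟩
  · rw [isInnerFibration_iff_innerFibration] at hp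
    exact quasicategory_of_innerFibration (Limits.pullback.snd p σ)
  · have := h n v
    exact hasLift_of_quasicategory_pullback (Fin.lt_def.2 h0) (Fin.lt_def.2 hn) sq
end

section
/- If X is a quasicategory and D is an ordinary category, then any map of simplicial sets X → N(D) is an inner fibration. -/
open CategoryTheory Simplicial SSet Opposite

universe v u

/-! A simplex of a nerve, or of any strict Segal simplicial set, is determined by its spine, and
the spine of `Δ[n]` lies in every inner horn. So two maps `Δ[n] ⟶ N(D)` agreeing on an inner horn
are equal, and any horn filler in `X` is automatically a lift against `p`. -/

namespace SSet

variable {S : SSet.{u}}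

lemma spine_yonedaEquiv_eq_map_horn_spineId {m : ℕ} {i : Fin (m + 3)} (h₀ : 0 < i)
    (hₙ : i < Fin.last (m + 2)) (f : Δ[m + 2] ⟶ S) :
    S.spine (m + 2) (yonedaEquiv f) = (horn.spineId i h₀ hₙ).map (Λ[m + 2, i].ι ≫ f) := by
  ext k
  change S.map _ (f.app _ (yonedaEquiv (𝟙 _))) = _
  rw [← types_comp_apply (f.app _) (S.map _), ← f.naturality]
  rfl

lemma hom_ext_of_horn_ι_comp [S.IsStrictSegal] {n : ℕ} {i : Fin (n + 1)} (h₀ : 0 < i)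
    (hₙ : i < Fin.last n) {f g : Δ[n] ⟶ S} (h : Λ[n, i].ι ≫ f = Λ[n, i].ι ≫ g) : f = g := by
  obtain ⟨m, rfl⟩ : ∃ m, n = m + 2 := by
    have : (i : ℕ) < n := hₙ
    have : 0 < (i : ℕ) := h₀
    exact ⟨n - 2, by omega⟩
  apply yonedaEquiv.injective
  apply (IsStrictSegal.segal (m + 2)).injective
  rw [spine_yonedaEquiv_eq_map_horn_spineId h₀ hₙ, spine_yonedaEquiv_eq_map_horn_spineId h₀ hₙ, h]

end SSet

theorem isInnerFibration_of_isStrictSegal {X S : SSet.{u}} [Quasicategory X] [S.IsStrictSegal]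
    (p : X ⟶ S) : IsInnerFibration p := by
  intro n i _ h₀ hₙ
  have h₀' : 0 < i := Fin.lt_def.mpr h₀
  have hₙ' : i < Fin.last n := Fin.lt_def.mpr hₙ
  refine ⟨fun {f g} sq => ?_⟩
  obtain ⟨σ, hσ⟩ := Quasicategory.hornFilling h₀' hₙ' f
  exact ⟨⟨σ, hσ.symm, hom_ext_of_horn_ι_comp h₀' hₙ' (by rw [← Category.assoc, ← hσ, sq.w])⟩⟩

/-- If `X` is a quasicategory and `D` is an ordinary category, then any map of
simplicial sets `X ⟶ N(D)` is an inner fibration. -/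
theorem isInnerFibration_to_nerve {D : Type u} [Category.{v} D]
    (X : SSet.{max u v}) [Quasicategory X] (p : X ⟶ nerve D) :
    IsInnerFibration p :=
  isInnerFibration_of_isStrictSegal p
end

section
/- For a quasicategory C and an object x ∈ C₀, the projection from the overcategory C_{/x} → C is a right fibration. -/
open CategoryTheory Simplicial SSet Opposite

universe v u

/-- A *right fibration* is a map of simplicial sets with the right lifting property
with respect to the horn inclusions `Λ[n, i] ↪ Δ[n]` for `n ≥ 1` and `0 < i ≤ n`. -/
def IsRightFibration {X S : SSet.{u}} (p : X ⟶ S) : Prop :=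
  ∀ ⦃n : ℕ⦄ ⦃i : Fin (n + 1)⦄, 1 ≤ n → 0 < (i : ℕ) →
    HasLiftingProperty (Λ[n, i].ι) p


/-- The "cocone" of a morphism of the simplex category: `[a.len+1] ⟶ [b.len+1]`
sending the last vertex to the last vertex and `i ↦ ψ(i)` otherwise. -/
def coconeHom {a b : SimplexCategory} (ψ : a ⟶ b) :
    (⦋a.len + 1⦌ : SimplexCategory) ⟶ ⦋b.len + 1⦌ :=
  SimplexCategory.Hom.mk
    { toFun := Fin.lastCases (Fin.last _) (fun i => (ψ.toOrderHom i).castSucc)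
      monotone' := by
        intro x y h
        induction x using Fin.lastCases with
        | last =>
          rw [Fin.last_le_iff] at h
          subst h
          exact le_refl _
        | cast i =>
          induction y using Fin.lastCases with
          | last => simp [Fin.le_last]
          | cast j =>
            simp only [Fin.lastCases_castSucc]
            exact Fin.castSucc_le_castSucc_iff.mpr (ψ.toOrderHom.monotone
              (Fin.castSucc_le_castSucc_iff.mp h)) }

lemma coconeHom_id (a : SimplexCategory) :
    coconeHom (𝟙 a) = 𝟙 (⦋a.len + 1⦌ : SimplexCategory) := by
  apply SimplexCategory.Hom.ext
  apply OrderHom.ext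
  funext i
  induction i using Fin.lastCases <;> simp [coconeHom]

lemma coconeHom_comp {a b c : SimplexCategory} (ψ : a ⟶ b) (ξ : b ⟶ c) :
    coconeHom (ψ ≫ ξ) = coconeHom ψ ≫ coconeHom ξ := by
  apply SimplexCategory.Hom.ext
  apply OrderHom.ext
  funext i
  induction i using Fin.lastCases <;> ((simp [coconeHom]) <;> (dsimp only [DFunLike.coe]; simp))

lemma const_comp_coconeHom {a b : SimplexCategory} (ψ : a ⟶ b) :
    SimplexCategory.const ⦋0⦌ ⦋a.len + 1⦌ (Fin.last _) ≫ coconeHom ψ =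
      SimplexCategory.const ⦋0⦌ ⦋b.len + 1⦌ (Fin.last _) := by
  apply SimplexCategory.Hom.ext
  apply OrderHom.ext
  funext i
  (simp [coconeHom, SimplexCategory.const]) <;> (dsimp only [DFunLike.coe]; simp)

/-- The inclusion `a ⟶ [a.len+1]` sending `i ↦ i` (the face opposite the last vertex). -/
def coconeIncl (a : SimplexCategory) : a ⟶ ⦋a.len + 1⦌ :=
  SimplexCategory.Hom.mk ⟨Fin.castSucc, fun _ _ h => Fin.castSucc_le_castSucc_iff.mpr h⟩

lemma coconeIncl_naturality {a b : SimplexCategory} (ψ : a ⟶ b) :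
    coconeIncl a ≫ coconeHom ψ = ψ ≫ coconeIncl b := by
  apply SimplexCategory.Hom.ext
  apply OrderHom.ext
  funext i
  (simp [coconeHom, coconeIncl]) <;> (dsimp only [DFunLike.coe]; simp)

/-- The overcategory `C_{/x}`: its `n`-simplices are the `(n+1)`-simplices of `C`
whose final vertex is `x`. -/
def over' (C : SSet.{u}) (x : C _⦋0⦌) : SSet.{u} where
  obj Δ := { σ : C.obj (op ⦋Δ.unop.len + 1⦌) //
    C.map (SimplexCategory.const ⦋0⦌ ⦋Δ.unop.len + 1⦌ (Fin.last _)).op σ = x }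
  map φ := TypeCat.ofHom fun σ => ⟨C.map (coconeHom φ.unop).op σ.1, by
    rw [← FunctorToTypes.map_comp_apply, ← op_comp, const_comp_coconeHom]
    exact σ.2⟩
  map_id Δ := by
    refine ConcreteCategory.hom_ext _ _ fun σ => ?_
    refine Subtype.ext ?_
    show C.map (coconeHom (𝟙 Δ.unop)).op σ.1 = σ.1
    rw [coconeHom_id]
    simp
  map_comp φ ξ := by
    refine ConcreteCategory.hom_ext _ _ fun σ => ?_
    refine Subtype.ext ?_
    show C.map (coconeHom (ξ.unop ≫ φ.unop)).op σ.1 = _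
    rw [coconeHom_comp, op_comp, FunctorToTypes.map_comp_apply]
    rfl

/-- The forgetful projection `C_{/x} ⟶ C`. -/
def overProj (C : SSet.{u}) (x : C _⦋0⦌) : over' C x ⟶ C where
  app Δ := TypeCat.ofHom fun σ => C.map (coconeIncl Δ.unop).op σ.1
  naturality Δ₁ Δ₂ φ := by
    refine ConcreteCategory.hom_ext _ _ fun σ => ?_
    show C.map (coconeIncl Δ₂.unop).op (C.map (coconeHom φ.unop).op σ.1) =
      C.map φ (C.map (coconeIncl Δ₁.unop).op σ.1)
    rw [← FunctorToTypes.map_comp_apply, ← op_comp, coconeIncl_naturality,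
      op_comp, FunctorToTypes.map_comp_apply]
    rfl

/-!
A lifting problem for `Λ[n, i] ↪ Δ[n]` against `C_{/x} ⟶ C` is the same thing as a map
`Λ[n + 1, i] ⟶ C`: its face opposite the cone point `n + 1` is the given `n`-simplex of `C`,
and its face opposite `j ≤ n`, `j ≠ i`, is the `j`-th face of the given map into `C_{/x}`,
read as a simplex of `C` with last vertex `x`. As `0 < i < n + 1`, this horn is inner and so
has a filler in the quasicategory `C`. The filler's last vertex is `x`, and as a simplex of
`C_{/x}` it solves the lifting problem, because its faces are the prescribed ones.
-/

lemma coconeHom_δ {m : ℕ} (l : Fin (m + 2)) :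
    coconeHom (SimplexCategory.δ l) = SimplexCategory.δ l.castSucc := by
  ext k : 3
  induction k using Fin.lastCases with
  | last => simp [coconeHom, SimplexCategory.δ]
  | cast k => simp [coconeHom, SimplexCategory.δ]

lemma coconeIncl_eq_δ_last (m : ℕ) :
    coconeIncl ⦋m⦌ = SimplexCategory.δ (Fin.last (m + 1)) := by
  ext k : 3
  exact (Fin.succAbove_last_apply k).symm

section ConeTranspose

variable {C : SSet.{u}} {x : C _⦋0⦌} {m : ℕ}

def coneTranspose (φ : Δ[m] ⟶ over' C x) : Δ[m + 1] ⟶ C :=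
  yonedaEquiv.symm (yonedaEquiv φ).1

lemma coneTranspose_injective : Function.Injective (coneTranspose (C := C) (x := x) (m := m)) :=
  fun _ _ h => yonedaEquiv.injective (Subtype.ext (yonedaEquiv.symm.injective h))

lemma stdSimplex_map_coconeHom_comp_coneTranspose {a : ℕ} (ψ : ⦋a⦌ ⟶ ⦋m⦌)
    (φ : Δ[m] ⟶ over' C x) :
    SSet.stdSimplex.map (coconeHom ψ) ≫ coneTranspose φ =
      coneTranspose (SSet.stdSimplex.map ψ ≫ φ) := by
  rw [coneTranspose, coneTranspose, yonedaEquiv_symm_naturality_left, ← yonedaEquiv_naturality]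
  rfl

lemma δ_castSucc_comp_coneTranspose (l : Fin (m + 2)) (φ : Δ[m + 1] ⟶ over' C x) :
    stdSimplex.δ l.castSucc ≫ coneTranspose φ = coneTranspose (stdSimplex.δ l ≫ φ) := by
  rw [show stdSimplex.δ l.castSucc = SSet.stdSimplex.map (coconeHom (SimplexCategory.δ l)) by
    rw [coconeHom_δ]; rfl]
  exact stdSimplex_map_coconeHom_comp_coneTranspose _ φ

lemma δ_last_comp_coneTranspose (φ : Δ[m] ⟶ over' C x) :
    stdSimplex.δ (Fin.last (m + 1)) ≫ coneTranspose φ = φ ≫ overProj C x := by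
  rw [show stdSimplex.δ (Fin.last (m + 1)) = SSet.stdSimplex.map (coconeIncl ⦋m⦌) by
    rw [coconeIncl_eq_δ_last]; rfl, coneTranspose, yonedaEquiv_symm_naturality_left,
    yonedaEquiv.symm_apply_eq, yonedaEquiv_comp]
  rfl

lemma map_const_last_yonedaEquiv_coneTranspose (φ : Δ[m] ⟶ over' C x) :
    C.map (SimplexCategory.const ⦋0⦌ ⦋m + 1⦌ (Fin.last _)).op (yonedaEquiv (coneTranspose φ))
      = x := by
  rw [coneTranspose, Equiv.apply_symm_apply]
  exact (yonedaEquiv φ).2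

def coneLift (τ : Δ[m + 1] ⟶ C)
    (hτ : C.map (SimplexCategory.const ⦋0⦌ ⦋m + 1⦌ (Fin.last _)).op (yonedaEquiv τ) = x) :
    Δ[m] ⟶ over' C x :=
  yonedaEquiv.symm ⟨yonedaEquiv τ, hτ⟩

lemma coneTranspose_coneLift (τ : Δ[m + 1] ⟶ C)
    (hτ : C.map (SimplexCategory.const ⦋0⦌ ⦋m + 1⦌ (Fin.last _)).op (yonedaEquiv τ) = x) :
    coneTranspose (coneLift τ hτ) = τ :=
  (congrArg (fun σ : (over' C x) _⦋m⦌ => SSet.yonedaEquiv.symm σ.1)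
    (SSet.yonedaEquiv.apply_symm_apply _)).trans (SSet.yonedaEquiv.symm_apply_apply τ)

lemma map_const_last_yonedaEquiv_of_δ_zero_comp (τ : Δ[m + 2] ⟶ C) (φ : Δ[m] ⟶ over' C x)
    (h : stdSimplex.δ 0 ≫ τ = coneTranspose φ) :
    C.map (SimplexCategory.const ⦋0⦌ ⦋m + 2⦌ (Fin.last _)).op (yonedaEquiv τ) = x := by
  have hconst : SimplexCategory.const ⦋0⦌ ⦋m + 2⦌ (Fin.last _) =
      SimplexCategory.const ⦋0⦌ ⦋m + 1⦌ (Fin.last _) ≫ SimplexCategory.δ 0 := by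
    ext : 3
    simp [SimplexCategory.δ]
  rw [hconst, op_comp, Functor.map_comp_apply, ← SimplicialObject.δ_def,
    ← stdSimplex.yonedaEquiv_δ_comp, h, map_const_last_yonedaEquiv_coneTranspose]

end ConeTranspose

section ConeHorn

variable {C : SSet.{u}} {x : C _⦋0⦌} {n : ℕ} {i : Fin (n + 2)}
  (f : (Λ[n + 1, i] : SSet) ⟶ over' C x) (g : Δ[n + 1] ⟶ C)

def coneHornFace (j : Fin (n + 3)) (hj : j ≠ i.castSucc) : Δ[n + 1] ⟶ C :=
  if h : j = Fin.last _ then g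
  else
    coneTranspose (horn.ι i (j.castPred h) (fun e => hj (by rw [← e, Fin.castSucc_castPred])) ≫ f)

lemma coneHornFace_last (h : Fin.last (n + 2) ≠ i.castSucc) :
    coneHornFace f g (Fin.last _) h = g :=
  dif_pos rfl

lemma coneHornFace_castSucc (k : Fin (n + 2)) (hk : k.castSucc ≠ i.castSucc) :
    coneHornFace f g k.castSucc hk =
      coneTranspose (horn.ι i k (fun e => hk (congrArg _ e)) ≫ f) :=
  dif_neg (Fin.castSucc_ne_last k)

lemma coneHornFace_isCompatible (hw : f ≫ overProj C x = Λ[n + 1, i].ι ≫ g) :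
    horn.IsCompatible (coneHornFace f g) := by
  rw [horn.isCompatible_iff]
  intro j k hj hk hjk
  obtain ⟨j, rfl⟩ := j.eq_castSucc_of_ne_last (Fin.ne_last_of_lt hjk)
  induction k using Fin.lastCases with
  | last =>
    rw [coneHornFace_last, coneHornFace_castSucc, Fin.pred_last, δ_last_comp_coneTranspose,
      Category.assoc, hw, horn.ι_ι_assoc, Fin.castPred_castSucc]
  | cast k =>
    have hj' : j ≠ i := fun e => hj (congrArg _ e)
    have hk' : k ≠ i := fun e => hk (congrArg _ e)
    have hjk' : j < k := Fin.castSucc_lt_castSucc_iff.mp hjk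
    obtain _ | n := n
    · rw [Fin.ne_iff_vne] at hj' hk'
      rw [Fin.lt_def] at hjk'
      omega
    obtain ⟨j, rfl⟩ := j.eq_castSucc_of_ne_last (Fin.ne_last_of_lt hjk')
    have hkpred : k.castSucc.pred (Fin.ne_zero_of_lt hjk) =
        (k.pred (Fin.ne_zero_of_lt hjk')).castSucc := by
      ext; simp
    rw [coneHornFace_castSucc, coneHornFace_castSucc, hkpred, Fin.castPred_castSucc,
      δ_castSucc_comp_coneTranspose, δ_castSucc_comp_coneTranspose]
    congr 1
    simpa only [Fin.castPred_castSucc] using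
      (horn.IsCompatible.of_hom f).δ_pred_comp j.castSucc k hj' hk' hjk'

end ConeHorn

/-- For a quasicategory `C` and an object `x`, the projection `C_{/x} ⟶ C` from the
overcategory is a right fibration. -/
theorem isRightFibration_overProj (C : SSet.{u}) [Quasicategory C] (x : C _⦋0⦌) :
    IsRightFibration (overProj C x) := by
  intro n i hn hi
  obtain ⟨n, rfl⟩ : ∃ m, n = m + 1 := ⟨n - 1, by omega⟩
  have h0i : 0 < i := Fin.lt_def.mpr hi
  refine ⟨fun {f g} sq => ?_⟩
  have hcompat := coneHornFace_isCompatible f g sq.w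
  obtain ⟨σ, hσ⟩ := Quasicategory.hornFilling (Fin.castSucc_pos h0i) (Fin.castSucc_lt_last i)
    hcompat.desc
  have hface (j : Fin (n + 3)) (hj : j ≠ i.castSucc) :
      stdSimplex.δ j ≫ σ = coneHornFace f g j hj := by
    rw [← horn.ι_ι_assoc i.castSucc j hj, ← hσ, hcompat.ι_desc]
  have hx := map_const_last_yonedaEquiv_of_δ_zero_comp σ _
    ((hface _ (Fin.castSucc_lt_castSucc_iff.mpr h0i).ne).trans (coneHornFace_castSucc f g 0 _))
  refine ⟨⟨{ l := coneLift σ hx, fac_left := ?_, fac_right := ?_ }⟩⟩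
  · refine horn.hom_ext' fun j hj => coneTranspose_injective ?_
    rw [horn.ι_ι_assoc, ← δ_castSucc_comp_coneTranspose, coneTranspose_coneLift,
      hface _ ((Fin.castSucc_injective _).ne hj), coneHornFace_castSucc]
  · rw [← δ_last_comp_coneTranspose, coneTranspose_coneLift,
      hface _ (Fin.castSucc_lt_last i).ne', coneHornFace_last]
end
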